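/- arXiv:2204.05526 — 2 statements merged into one kernel-verified Lean document; each statement's English description precedes it below -/
import Mathlib

section
/- Let X be a reduced scheme of finite type over a perfect field k of characteristic p > 0 which satisfies Serre's condition S₂. Let f : Y → X be a finite universal homeomorphism with Y reduced, such that f is an isomorphism over a dense open U ⊆ X whose complement has codimension ≥ 2 and such that U (hence its preimage) is S₂. Then the local sections of O_Y over the preimage of U are iterated p-th power roots of sections of O_U, i.e., for every affine open, O_Y-sections have some p-power lying in O_X. -/
universe u

open scoped TensorProduct

/-- A ring map `f : A → B` is a universal homeomorphism if for every `A`-algebra `C` the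
base-changed map `Spec (C ⊗[A] B) → Spec C` is a homeomorphism. -/
def IsUnivHomeoRingHom {A B : Type u} [CommRing A] [CommRing B] (f : A →+* B) : Prop :=
  ∀ (C : Type u) [CommRing C] (g : A →+* C),
    letI : Algebra A B := f.toAlgebra
    letI : Algebra A C := g.toAlgebra
    IsHomeomorph (PrimeSpectrum.comap (algebraMap C (C ⊗[A] B)))

/-- A local ring has depth at least one. -/
def DepthGeOne (R : Type u) [CommRing R] [IsLocalRing R] : Prop :=
  ∃ x ∈ IsLocalRing.maximalIdeal R, x ∈ nonZeroDivisors R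

/-- A local ring has depth at least two. -/
def DepthGeTwo (R : Type u) [CommRing R] [IsLocalRing R] : Prop :=
  ∃ x ∈ IsLocalRing.maximalIdeal R, x ∈ nonZeroDivisors R ∧
    ∃ y ∈ IsLocalRing.maximalIdeal R,
      Ideal.Quotient.mk (Ideal.span {x}) y ∈ nonZeroDivisors (R ⧸ Ideal.span ({x} : Set R))

/-- Serre's condition `S₂` at a prime. -/
def SerreS2At (A : Type u) [CommRing A] (q : PrimeSpectrum A) : Prop :=
  ((1 : ℕ∞) ≤ Order.height q → DepthGeOne (Localization.AtPrime q.asIdeal)) ∧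
  ((2 : ℕ∞) ≤ Order.height q → DepthGeTwo (Localization.AtPrime q.asIdeal))

/-- Serre's condition `S₂`. -/
def SerreS2 (A : Type u) [CommRing A] : Prop := ∀ q, SerreS2At A q

/-!
Every `b` already lies in `f.range` (so `n = 0`), by an algebraic Hartogs argument. Otherwise
the ideal `I` of denominators of `b` (the `a` with `f a * b ∈ f.range`) is proper; let `Q` be a
minimal prime over it. The image of `b` in `B_Q` is not in the image of `A_Q`, so `Q ∈ Z` and `A_Q` has depth
two, witnessed by a regular sequence `x, y`. Since `Spec f` is a homeomorphism, `f` is injective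
and minimal primes of `B` contract to minimal primes of `A`; as the nonzerodivisors of the
reduced ring `B_Q` are the elements outside its minimal primes, `A_Q → B_Q` is injective and
preserves nonzerodivisors. Regularity of `x, y` then shows that the ideal `J` of denominators of
`b` in `A_Q` satisfies `x r, y r ∈ J → r ∈ J`. As `J` contains `I A_Q`, whose radical is the
maximal ideal, `J` contains powers of `x` and `y`, which forces `1 ∈ J`.
-/

open nonZeroDivisors

theorem IsUnivHomeoRingHom.isHomeomorph_comap {A B : Type u} [CommRing A] [CommRing B]
    {f : A →+* B} (hf : IsUnivHomeoRingHom f) : IsHomeomorph (PrimeSpectrum.comap f) := by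
  let : Algebra A B := f.toAlgebra
  let e := (Algebra.TensorProduct.lid A B).toRingEquiv
  have hf_eq : f = (e : A ⊗[A] B →+* B).comp (algebraMap A (A ⊗[A] B)) := by
    ext a
    simp [e, Algebra.TensorProduct.algebraMap_apply, Algebra.smul_def,
      RingHom.algebraMap_toAlgebra]
  rw [hf_eq, PrimeSpectrum.comap_comp]
  exact (hf A (RingHom.id A)).comp (PrimeSpectrum.isHomeomorph_comap_of_bijective e.bijective)

theorem RingHom.injective_of_denseRange_comap {R S : Type*} [CommRing R] [CommRing S]
    [IsReduced R] {f : R →+* S} (hf : DenseRange (PrimeSpectrum.comap f)) :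
    Function.Injective f := by
  rw [injective_iff_ker_eq_bot, ← le_bot_iff, ← nilradical_eq_bot_iff.mpr ‹_›]
  exact (PrimeSpectrum.denseRange_comap_iff_ker_le_nilRadical f).mp hf

theorem PrimeSpectrum.isMin_comap_of_isHomeomorph {R S : Type*} [CommRing R] [CommRing S]
    {f : R →+* S} (hf : IsHomeomorph (PrimeSpectrum.comap f)) {x : PrimeSpectrum S}
    (hx : IsMin x) : IsMin (PrimeSpectrum.comap f x) := by
  intro y hy
  obtain ⟨z, rfl⟩ := hf.surjective y
  rw [PrimeSpectrum.le_iff_specializes, hf.isInducing.specializes_iff,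
    ← PrimeSpectrum.le_iff_specializes] at hy ⊢
  exact hx hy

theorem mapsTo_comap_minimalPrimes_of_isHomeomorph {R S : Type*} [CommRing R] [CommRing S]
    {f : R →+* S} (hf : IsHomeomorph (PrimeSpectrum.comap f)) :
    Set.MapsTo (Ideal.comap f) (minimalPrimes S) (minimalPrimes R) := fun P hP =>
  PrimeSpectrum.isMin_iff.mp <| PrimeSpectrum.isMin_comap_of_isHomeomorph hf
    (x := ⟨P, hP.isPrime⟩) (PrimeSpectrum.isMin_iff.mpr hP)

theorem eq_zero_of_forall_mem_minimalPrimes {R : Type*} [CommRing R] [IsReduced R] {a : R}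
    (h : ∀ P ∈ minimalPrimes R, a ∈ P) : a = 0 := by
  have : a ∈ (⊥ : Ideal R).radical := by
    rw [← Ideal.sInf_minimalPrimes]
    exact Submodule.mem_sInf.mpr h
  exact IsReduced.eq_zero a (by simpa using this)

theorem mem_nonZeroDivisors_of_forall_notMem_minimalPrimes {R : Type*} [CommRing R] [IsReduced R]
    {x : R} (hx : ∀ P ∈ minimalPrimes R, x ∉ P) : x ∈ R⁰ := by
  refine mem_nonZeroDivisors_iff_right.mpr fun z hz => eq_zero_of_forall_mem_minimalPrimes
    fun P hP => ?_
  exact (hP.isPrime.mem_or_mem (hz ▸ P.zero_mem)).resolve_right (hx P hP)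

theorem mapsTo_nonZeroDivisors_of_mapsTo_minimalPrimes {R S : Type*} [CommRing R] [CommRing S]
    [IsReduced S] {f : R →+* S}
    (hf : Set.MapsTo (Ideal.comap f) (minimalPrimes S) (minimalPrimes R)) :
    Set.MapsTo f R⁰ S⁰ :=
  fun _ hx => mem_nonZeroDivisors_of_forall_notMem_minimalPrimes fun _ hP hxP =>
    notMem_nonZeroDivisors_of_mem_mem_minimalPrimes (Ideal.mem_comap.mpr hxP) (hf hP) hx

theorem IsLocalization.mem_minimalPrimes_iff {R Rₘ : Type*} [CommRing R] [CommRing Rₘ]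
    [Algebra R Rₘ] (M : Submonoid R) [IsLocalization M Rₘ] {P : Ideal Rₘ} :
    P ∈ minimalPrimes Rₘ ↔ P.under R ∈ minimalPrimes R := by
  show P ∈ (⊥ : Ideal Rₘ).minimalPrimes ↔ P.under R ∈ (⊥ : Ideal R).minimalPrimes
  rw [← Ideal.map_bot (f := algebraMap R Rₘ), IsLocalization.minimalPrimes_map M Rₘ]
  rfl

theorem Ideal.eq_top_of_pow_mem_of_mul_mem {R : Type*} [CommSemiring R] {J : Ideal R} {x y : R}
    (hJ : ∀ r, x * r ∈ J → y * r ∈ J → r ∈ J) {m n : ℕ} (hx : x ^ m ∈ J)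
    (hy : y ^ n ∈ J) : J = ⊤ := by
  have mem_of_pow_mul_mem : ∀ k r, y ^ k * r ∈ J → x * r ∈ J → r ∈ J := by
    intro k
    induction k with
    | zero => intro r h _; simpa using h
    | succ k ih =>
      intro r hyr hxr
      refine hJ r hxr (ih _ (by rwa [pow_succ, mul_assoc] at hyr) ?_)
      rw [mul_left_comm]
      exact J.mul_mem_left y hxr
  have mem_of_mul_mem : ∀ r, x * r ∈ J → r ∈ J :=
    fun r => mem_of_pow_mul_mem n r (J.mul_mem_right r hy)
  have one_mem_of_pow_mem : ∀ k, x ^ k ∈ J → (1 : R) ∈ J := by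
    intro k
    induction k with
    | zero => simp
    | succ k ih => exact fun h => ih (mem_of_mul_mem _ (by rwa [pow_succ'] at h))
  exact (Ideal.eq_top_iff_one J).mpr (one_mem_of_pow_mem m hx)

namespace RingHom

variable {R S : Type*} [CommRing R] [CommRing S]

def denominatorIdeal (f : R →+* S) (b : S) : Ideal R where
  carrier := {a | f a * b ∈ f.range}
  zero_mem' := ⟨0, by simp⟩
  add_mem' := by
    rintro a a' ⟨c, hc⟩ ⟨c', hc'⟩
    exact ⟨c + c', by simp only [map_add, add_mul, hc, hc']⟩
  smul_mem' := by
    rintro r a ⟨c, hc⟩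
    exact ⟨r * c, by simp only [smul_eq_mul, map_mul, mul_assoc, hc]⟩

variable {f : R →+* S} {b : S}

theorem mem_denominatorIdeal {a : R} : a ∈ f.denominatorIdeal b ↔ f a * b ∈ f.range := Iff.rfl

theorem denominatorIdeal_eq_top_iff : f.denominatorIdeal b = ⊤ ↔ b ∈ f.range := by
  rw [Ideal.eq_top_iff_one, mem_denominatorIdeal, map_one, one_mul]

theorem mem_denominatorIdeal_of_mul_mem (hf : Function.Injective f) {x y r : R}
    (hx : f x ∈ S⁰)
    (hy : Ideal.Quotient.mk (Ideal.span {x}) y ∈ (R ⧸ Ideal.span {x})⁰)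
    (hxr : x * r ∈ f.denominatorIdeal b) (hyr : y * r ∈ f.denominatorIdeal b) :
    r ∈ f.denominatorIdeal b := by
  obtain ⟨c, hc⟩ := hxr
  obtain ⟨c', hc'⟩ := hyr
  have hyc : y * c = x * c' := hf <| by
    simp only [map_mul] at hc hc' ⊢
    rw [hc, hc']
    ring
  have hc_mem : c ∈ Ideal.span {x} := by
    rw [← Ideal.Quotient.eq_zero_iff_mem]
    refine (mem_nonZeroDivisors_iff.mp hy).2 _ ?_
    rw [mul_comm, ← map_mul, hyc, Ideal.Quotient.eq_zero_iff_mem]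
    exact Ideal.mul_mem_right _ _ (Ideal.mem_span_singleton_self x)
  obtain ⟨d, rfl⟩ := Ideal.mem_span_singleton'.mp hc_mem
  have h : (f d - f r * b) * f x = 0 := by
    simp only [map_mul] at hc
    linear_combination hc
  exact ⟨d, sub_eq_zero.mp ((mem_nonZeroDivisors_iff.mp hx).2 _ h)⟩

theorem mem_range_of_maximalIdeal_le_radical [IsLocalRing R] (hf : Function.Injective f)
    (hf₀ : Set.MapsTo f R⁰ S⁰) (hR : DepthGeTwo R)
    (hb : IsLocalRing.maximalIdeal R ≤ (f.denominatorIdeal b).radical) : b ∈ f.range := by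
  obtain ⟨x, hxm, hx, y, hym, hy⟩ := hR
  obtain ⟨m, hm⟩ := hb hxm
  obtain ⟨n, hn⟩ := hb hym
  exact denominatorIdeal_eq_top_iff.mp <| Ideal.eq_top_of_pow_mem_of_mul_mem
    (fun r => mem_denominatorIdeal_of_mul_mem hf (hf₀ hx) hy) hm hn

end RingHom

namespace IsLocalization

variable {R S : Type*} [CommRing R] [CommRing S] (f : R →+* S) (M : Submonoid R)
  {Rₘ Sₘ : Type*} [CommRing Rₘ] [CommRing Sₘ] [Algebra R Rₘ] [Algebra S Sₘ]
  [IsLocalization M Rₘ] [IsLocalization (M.map f) Sₘ]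

theorem map_denominatorIdeal_le (b : S) :
    (f.denominatorIdeal b).map (algebraMap R Rₘ) ≤
      (map Sₘ f M.le_comap_map : Rₘ →+* Sₘ).denominatorIdeal (algebraMap S Sₘ b) := by
  rw [Ideal.map_le_iff_le_comap]
  rintro a ⟨c, hc⟩
  exact ⟨algebraMap R Rₘ c, by rw [map_eq, map_eq, hc, map_mul]⟩

theorem exists_mem_denominatorIdeal_of_algebraMap_mem_range {b : S}
    (hb : algebraMap S Sₘ b ∈ (map Sₘ f M.le_comap_map : Rₘ →+* Sₘ).range) :
    ∃ s ∈ M, s ∈ f.denominatorIdeal b := by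
  obtain ⟨w, hw⟩ := hb
  obtain ⟨a, s, rfl⟩ := exists_mk'_eq M w
  rw [map_mk', mk'_eq_iff_eq_mul, ← map_mul, eq_iff_exists (M.map f)] at hw
  obtain ⟨⟨_, u, huM, rfl⟩, hu⟩ := hw
  refine ⟨u * s, M.mul_mem huM s.2, u * a, ?_⟩
  simp only [map_mul] at hu ⊢
  linear_combination hu

theorem mapsTo_comap_map_minimalPrimes
    (hf : Set.MapsTo (Ideal.comap f) (minimalPrimes S) (minimalPrimes R)) :
    Set.MapsTo (Ideal.comap (map Sₘ f M.le_comap_map : Rₘ →+* Sₘ))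
      (minimalPrimes Sₘ) (minimalPrimes Rₘ) := by
  intro P hP
  rw [mem_minimalPrimes_iff M, Ideal.under, Ideal.comap_comap, map_comp,
    ← Ideal.comap_comap]
  exact hf ((mem_minimalPrimes_iff (M.map f)).mp hP)

end IsLocalization

theorem sections_have_p_power_in_image_general
    (p : ℕ)
    (A : Type u) [CommRing A]
    [IsReduced A] (hS2 : SerreS2 A)
    (B : Type u) [CommRing B] [IsReduced B]
    (f : A →+* B) (huh : IsUnivHomeoRingHom f)
    (Z : Set (PrimeSpectrum A))
    (hZcodim : ∀ q ∈ Z, (2 : ℕ∞) ≤ Order.height q)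
    (hiso : ∀ q : PrimeSpectrum A, q ∉ Z →
      Function.Bijective
        (IsLocalization.map (M := q.asIdeal.primeCompl) (T := q.asIdeal.primeCompl.map f)
          (Localization (q.asIdeal.primeCompl.map f)) f (Submonoid.le_comap_map _) :
          Localization q.asIdeal.primeCompl →+* Localization (q.asIdeal.primeCompl.map f))) :
    ∀ b : B, ∃ n : ℕ, b ^ p ^ n ∈ f.range := by
  intro b
  refine ⟨0, ?_⟩
  rw [pow_zero, pow_one]
  have hf_homeo := huh.isHomeomorph_comap
  by_contra hb
  obtain ⟨⟨Q, hQ⟩⟩ :=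
    Ideal.nonempty_minimalPrimes (mt RingHom.denominatorIdeal_eq_top_iff.mp hb)
  have := hQ.isPrime
  let q : PrimeSpectrum A := ⟨Q, this⟩
  let F := (IsLocalization.map (M := q.asIdeal.primeCompl) (T := q.asIdeal.primeCompl.map f)
    (Localization (q.asIdeal.primeCompl.map f)) f (Submonoid.le_comap_map _) :
    Localization.AtPrime q.asIdeal →+* Localization (q.asIdeal.primeCompl.map f))
  have hb_loc : algebraMap B _ b ∉ F.range := fun h => by
    obtain ⟨s, hs, hsb⟩ :=
      IsLocalization.exists_mem_denominatorIdeal_of_algebraMap_mem_range f _ h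
    exact hs (hQ.le hsb)
  have hqZ : q ∈ Z := by_contra fun hq => hb_loc ((hiso q hq).2 _)
  refine hb_loc <| RingHom.mem_range_of_maximalIdeal_le_radical ?_ ?_
    ((hS2 q).2 (hZcodim q hqZ)) ?_
  · exact IsLocalization.map_injective_of_injective _ _ _
      (RingHom.injective_of_denseRange_comap hf_homeo.surjective.denseRange)
  · exact mapsTo_nonZeroDivisors_of_mapsTo_minimalPrimes <|
      IsLocalization.mapsTo_comap_map_minimalPrimes f _
        (mapsTo_comap_minimalPrimes_of_isHomeomorph hf_homeo)
  · calc IsLocalRing.maximalIdeal _ = Q.map (algebraMap A (Localization.AtPrime Q)) :=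
          Localization.AtPrime.map_eq_maximalIdeal.symm
      _ = ((f.denominatorIdeal b).map (algebraMap A _)).radical :=
          (IsLocalization.AtPrime.radical_map_of_mem_minimalPrimes _ Q _ hQ).symm
      _ ≤ _ := Ideal.radical_mono (IsLocalization.map_denominatorIdeal_le f _ b)

/-- Let `X = Spec A` be a reduced affine scheme of finite type over a
perfect field `k` of characteristic `p > 0` satisfying `S₂`, and let `f : A → B`
(i.e. `Y = Spec B → X`) be a finite universal homeomorphism with `B` reduced, which is an
isomorphism (on localizations) over the dense open complement `U` of a closed subset
`Z ⊆ Spec A` of codimension `≥ 2`.  Then the sections of `O_Y` are iterated `p`-th power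
roots of sections of `O_X`: every `b : B` has some `p`-th power iterate lying in the
image of `A`. -/
theorem sections_have_p_power_in_image
    (p : ℕ) (hp : p.Prime)
    (k : Type u) [Field k] [PerfectField k] [CharP k p]
    (A : Type u) [CommRing A] [Algebra k A] (hft : Algebra.FiniteType k A)
    [IsReduced A] (hS2 : SerreS2 A)
    (B : Type u) [CommRing B] [IsReduced B]
    (f : A →+* B) (hfin : f.Finite) (huh : IsUnivHomeoRingHom f)
    (Z : Set (PrimeSpectrum A)) (hZclosed : IsClosed Z)
    (hZcodim : ∀ q ∈ Z, (2 : ℕ∞) ≤ Order.height q)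
    (hUdense : Dense Zᶜ)
    (hiso : ∀ q : PrimeSpectrum A, q ∉ Z →
      Function.Bijective
        (IsLocalization.map (M := q.asIdeal.primeCompl) (T := q.asIdeal.primeCompl.map f)
          (Localization (q.asIdeal.primeCompl.map f)) f (Submonoid.le_comap_map _) :
          Localization q.asIdeal.primeCompl →+* Localization (q.asIdeal.primeCompl.map f))) :
    ∀ b : B, ∃ n : ℕ, b ^ p ^ n ∈ f.range :=
  sections_have_p_power_in_image_general p A hS2 B f huh Z hZcodim hiso
end

section
/- Let X be an irreducible variety over an algebraically closed field k equipped with an action of the multiplicative monoid A¹ (extending a Gₘ-action), and suppose the fixed locus X⁰ = X^{Gₘ} consists of a single point x. Then X is unibranch at x, i.e., the normalization of X has exactly one point above x. -/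
/-!
A grading `R = ⨁ₙ 𝒜 n` is the same as a coaction `τ : R → R[t]`, `x ↦ x tⁿ` for `x ∈ 𝒜 n`, i.e.
an action of the monoid `𝔸¹`; acting with `t = 1` is the identity and acting with `t = 0` is the
projection onto `𝒜 0`. The coaction extends to `Frac R → Frac K[t]`, and since `K[t]` is integrally
closed and integrality over `R[t]` can be read off the coefficients, it restricts to a coaction
`φ : R' → R'[t]` on the normalization `R'`. The kernel `M` of `y ↦ φ(y)(0)` lies over `R₊`, so it
is maximal. If `P` is any prime of `R'` over `R₊`, then `τ` is constant modulo `P`, so the image of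
`φ(y)` in `(R'/P)[t]` is integral over the constants and hence constant; comparing `t = 1` with
`t = 0` gives `y ≡ φ(y)(0) mod P`, so `M ⊆ P` and `P = M`.
-/

open Polynomial

theorem IsFractionRing.ringHom_ext_of_subalgebra {R K T : Type*} [CommRing R] [Field K]
    [Algebra R K] [IsFractionRing R K] [CommRing T] [IsDomain T] {S : Subalgebra R K}
    {f g : S →+* T}
    (hf : Function.Injective (f.comp (algebraMap R S)))
    (h : f.comp (algebraMap R S) = g.comp (algebraMap R S)) : f = g := by
  have := (algebraMap R K).domain_nontrivial
  have h' := RingHom.congr_fun h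
  simp only [RingHom.comp_apply] at h'
  ext y
  obtain ⟨⟨a, b⟩, hab⟩ := IsLocalization.surj (nonZeroDivisors R) (y : K)
  have hab : y * algebraMap R S b = algebraMap R S a := Subtype.ext hab
  have hb : f (algebraMap R S b) ≠ 0 := fun hb ↦
    nonZeroDivisors.coe_ne_zero b <| hf <| by simpa using hb
  refine mul_right_cancel₀ hb ?_
  calc f y * f (algebraMap R S b) = g (algebraMap R S a) := by rw [← map_mul, hab, h']
    _ = g y * f (algebraMap R S b) := by rw [← hab, map_mul, h']

theorem Polynomial.natDegree_eq_zero_of_isIntegral {D : Type*} [CommRing D] [IsDomain D]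
    {p : D[X]} (hp : IsIntegral D p) : p.natDegree = 0 := by
  obtain ⟨Q, hQ, hQp⟩ := hp
  have hcomp : Q.comp p = 0 := hQp
  have hdeg := natDegree_comp (p := Q) (q := p)
  rw [hcomp, natDegree_zero, eq_comm, mul_eq_zero, hQ.natDegree_eq_zero] at hdeg
  rcases hdeg with rfl | hp
  · simp at hcomp
  · exact hp

theorem injective_algebraMap_comp_mapRingHom_val {R : Type*} [CommRing R] (K : Type*) [Field K]
    [Algebra R K] :
    Function.Injective ((algebraMap K[X] (FractionRing K[X])).comp
      (mapRingHom (integralClosure R K).val.toRingHom)) :=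
  RingHom.coe_comp _ _ ▸ (IsFractionRing.injective _ _).comp (map_injective _ Subtype.val_injective)

namespace GradedRing

variable {R σ : Type*} [CommRing R] [SetLike σ R] [AddSubmonoidClass σ R]
  (𝒜 : ℕ → σ) [GradedRing 𝒜]

theorem ringHom_ext {T : Type*} [Semiring T] {f g : R →+* T}
    (h : ∀ n, ∀ x ∈ 𝒜 n, f x = g x) : f = g :=
  RingHom.ext <| DirectSum.Decomposition.inductionOn 𝒜 (by simp only [map_zero])
    (fun m ↦ h _ _ m.2) (fun _ _ hx hy ↦ by simp only [map_add, hx, hy])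

noncomputable def coaction : R →+* R[X] :=
  (DirectSum.toSemiring (fun n ↦ (monomial n).toAddMonoidHom.comp (AddSubmonoidClass.subtype (𝒜 n)))
    (by simp [SetLike.coe_gOne])
    (fun _ _ ↦ by simp [SetLike.coe_gMul, monomial_mul_monomial])).comp
    (DirectSum.decomposeRingEquiv 𝒜).toRingHom

theorem coaction_of_mem {n : ℕ} {x : R} (hx : x ∈ 𝒜 n) : coaction 𝒜 x = monomial n x := by
  rw [coaction, RingHom.comp_apply]
  exact (congrArg _ (DirectSum.decompose_of_mem 𝒜 hx)).trans (DirectSum.toSemiring_of _ _ _ _ _)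

theorem evalRingHom_one_comp_coaction : (evalRingHom 1).comp (coaction 𝒜) = RingHom.id R :=
  ringHom_ext 𝒜 fun n x hx ↦ by simp [coaction_of_mem 𝒜 hx]

theorem evalRingHom_zero_comp_coaction : (evalRingHom 0).comp (coaction 𝒜) = projZeroRingHom 𝒜 :=
  ringHom_ext 𝒜 fun n x hx ↦ by
    rcases eq_or_ne n 0 with rfl | hn
    · simp [coaction_of_mem 𝒜 hx, DirectSum.decompose_of_mem_same 𝒜 hx]
    · simp [coaction_of_mem 𝒜 hx, DirectSum.decompose_of_mem_ne 𝒜 hx hn, hn]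

theorem map_coaction_of_irrelevant_le_ker {T : Type*} [CommRing T] (f : R →+* T)
    (hf : (HomogeneousIdeal.irrelevant 𝒜).toIdeal ≤ RingHom.ker f) :
    (mapRingHom f).comp (coaction 𝒜) = C.comp f :=
  ringHom_ext 𝒜 fun n x hx ↦ by
    rcases eq_or_ne n 0 with rfl | hn
    · simp [coaction_of_mem 𝒜 hx]
    · have hx0 : f x = 0 := hf <| by
        rw [HomogeneousIdeal.toIdeal_irrelevant, RingHom.mem_ker, projZeroRingHom_apply,
          DirectSum.decompose_of_mem_ne 𝒜 hx hn]
      simp [coaction_of_mem 𝒜 hx, hx0]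

theorem coaction_injective : Function.Injective (coaction 𝒜) :=
  Function.LeftInverse.injective (g := eval 1) (RingHom.congr_fun (evalRingHom_one_comp_coaction 𝒜))

section FractionRing

variable (K : Type*) [Field K] [Algebra R K] [IsFractionRing R K]

noncomputable def fractionCoaction : K →+* FractionRing K[X] :=
  IsFractionRing.lift (g := (algebraMap K[X] (FractionRing K[X])).comp
      ((mapRingHom (algebraMap R K)).comp (coaction 𝒜))) <|
    (IsFractionRing.injective _ _).comp <|
      (map_injective _ (IsFractionRing.injective R K)).comp (coaction_injective 𝒜)

theorem fractionCoaction_comp_algebraMap :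
    (fractionCoaction 𝒜 K).comp (algebraMap R K) =
      (algebraMap K[X] (FractionRing K[X])).comp
        ((mapRingHom (algebraMap R K)).comp (coaction 𝒜)) :=
  IsLocalization.lift_comp _

theorem exists_map_eq_fractionCoaction (y : integralClosure R K) :
    ∃ p : (integralClosure R K)[X],
      algebraMap K[X] (FractionRing K[X]) (p.map (integralClosure R K).val.toRingHom) =
        fractionCoaction 𝒜 K y := by
  obtain ⟨q, hq, hqy⟩ := y.2
  have hroot : (q.map (coaction 𝒜)).eval₂
      ((algebraMap K[X] (FractionRing K[X])).comp (mapRingHom (algebraMap R K)))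
      (fractionCoaction 𝒜 K y) = 0 := by
    rw [eval₂_map, RingHom.comp_assoc, ← fractionCoaction_comp_algebraMap, ← hom_eval₂, hqy,
      map_zero]
  obtain ⟨F, hF⟩ : ∃ F : K[X], algebraMap K[X] (FractionRing K[X]) F = fractionCoaction 𝒜 K y :=
    IsIntegrallyClosed.isIntegral_iff.mp
      ⟨(q.map (coaction 𝒜)).map (mapRingHom (algebraMap R K)), (hq.map _).map _, by
        rwa [eval₂_map]⟩
  let := Polynomial.algebra R K
  have hFint : IsIntegral R[X] F := ⟨q.map (coaction 𝒜), hq.map _, IsFractionRing.injective _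
    (FractionRing K[X]) <| by rwa [hom_eval₂, map_zero, hF]⟩
  obtain ⟨p, rfl⟩ := (mem_lifts F).mp <|
    (lifts_iff_coeff_lifts (f := (integralClosure R K).val.toRingHom) F).mpr fun n ↦
    ⟨⟨_, hFint.coeff n⟩, rfl⟩
  exact ⟨p, hF⟩

noncomputable def integralClosureCoaction : integralClosure R K →+* (integralClosure R K)[X] :=
  (RingEquiv.ofLeftInverse (Function.leftInverse_invFun
      (injective_algebraMap_comp_mapRingHom_val K))).symm.toRingHom.comp <|
    ((fractionCoaction 𝒜 K).comp (integralClosure R K).val.toRingHom).codRestrict _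
      (exists_map_eq_fractionCoaction 𝒜 K)

theorem algebraMap_map_integralClosureCoaction (y : integralClosure R K) :
    algebraMap K[X] (FractionRing K[X])
        ((integralClosureCoaction 𝒜 K y).map (integralClosure R K).val.toRingHom) =
      fractionCoaction 𝒜 K y :=
  congrArg Subtype.val <| (RingEquiv.ofLeftInverse <| Function.leftInverse_invFun
    (injective_algebraMap_comp_mapRingHom_val K)).apply_symm_apply
      ⟨_, exists_map_eq_fractionCoaction 𝒜 K y⟩

theorem integralClosureCoaction_comp_algebraMap :
    (integralClosureCoaction 𝒜 K).comp (algebraMap R (integralClosure R K)) =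
      (mapRingHom (algebraMap R (integralClosure R K))).comp (coaction 𝒜) := by
  ext1 r
  apply injective_algebraMap_comp_mapRingHom_val K
  simp only [RingHom.comp_apply, coe_mapRingHom, algebraMap_map_integralClosureCoaction, map_map]
  exact RingHom.congr_fun (fractionCoaction_comp_algebraMap 𝒜 K) r

theorem evalRingHom_one_comp_integralClosureCoaction :
    (evalRingHom 1).comp (integralClosureCoaction 𝒜 K) = RingHom.id _ := by
  have hcomp : ((evalRingHom 1).comp (integralClosureCoaction 𝒜 K)).comp
      (algebraMap R (integralClosure R K)) = algebraMap R (integralClosure R K) := by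
    ext1 r
    rw [RingHom.comp_assoc, integralClosureCoaction_comp_algebraMap]
    simp only [RingHom.comp_apply, coe_mapRingHom, coe_evalRingHom, eval_one_map]
    exact congrArg _ (RingHom.congr_fun (evalRingHom_one_comp_coaction 𝒜) r)
  refine IsFractionRing.ringHom_ext_of_subalgebra ?_ hcomp
  rw [hcomp]
  exact Function.Injective.of_comp (f := Subtype.val) (IsFractionRing.injective R K)

end FractionRing

theorem comap_ker_evalRingHom_zero_comp {S : Type*} [CommRing S] [Algebra R S]
    (φ : S →+* S[X])
    (hφ : φ.comp (algebraMap R S) = (mapRingHom (algebraMap R S)).comp (coaction 𝒜))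
    (hinj : Function.Injective (algebraMap R S)) :
    (RingHom.ker ((evalRingHom 0).comp φ)).comap (algebraMap R S) =
      (HomogeneousIdeal.irrelevant 𝒜).toIdeal := by
  have hev : (evalRingHom 0).comp (mapRingHom (algebraMap R S)) =
      (algebraMap R S).comp (evalRingHom 0) :=
    RingHom.ext (eval_zero_map _)
  rw [RingHom.comap_ker, RingHom.comp_assoc, hφ, ← RingHom.comp_assoc, hev, RingHom.comp_assoc,
    evalRingHom_zero_comp_coaction, RingHom.ker_comp_of_injective _ hinj,
    HomogeneousIdeal.toIdeal_irrelevant]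

theorem sub_eval_zero_mem_of_irrelevant_le_comap {S : Type*} [CommRing S] [Algebra R S]
    (φ : S →+* S[X])
    (hφ : φ.comp (algebraMap R S) = (mapRingHom (algebraMap R S)).comp (coaction 𝒜))
    (hφ1 : (evalRingHom 1).comp φ = RingHom.id S) {P : Ideal S} [P.IsPrime]
    (hP : (HomogeneousIdeal.irrelevant 𝒜).toIdeal ≤ P.comap (algebraMap R S)) {y : S}
    (hy : IsIntegral R y) : y - eval 0 (φ y) ∈ P := by
  let π := Ideal.Quotient.mk P
  have hconst := map_coaction_of_irrelevant_le_ker 𝒜 (π.comp (algebraMap R S)) <| by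
    rwa [← RingHom.comap_ker, Ideal.mk_ker]
  obtain ⟨q, hq, hqy⟩ := hy
  have hint : IsIntegral (S ⧸ P) ((φ y).map π) := by
    refine ⟨q.map (π.comp (algebraMap R S)), hq.map _, ?_⟩
    rw [eval₂_map, algebraMap_eq, ← hconst, ← mapRingHom_comp, RingHom.comp_assoc, ← hφ,
      ← coe_mapRingHom, ← hom_eval₂, ← hom_eval₂, hqy, map_zero, map_zero]
  have hy1 : eval 1 (φ y) = y := RingHom.congr_fun hφ1 y
  have h1 := congrArg (eval 1) (eq_C_of_natDegree_eq_zero (natDegree_eq_zero_of_isIntegral hint))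
  rw [eval_one_map, hy1, eval_C, coeff_map, coeff_zero_eq_eval_zero] at h1
  exact Ideal.Quotient.eq.mp h1

end GradedRing

open GradedRing

theorem unibranch_of_monoid_action_single_fixed_point_general
    (k : Type) [Field k]
    (R : Type) [CommRing R] [IsDomain R] [Algebra k R]
    (𝒜 : ℕ → Submodule k R) [GradedAlgebra 𝒜]
    (hfix : (HomogeneousIdeal.irrelevant 𝒜).toIdeal.IsMaximal) :
    ∃! P : Ideal (integralClosure R (FractionRing R)),
      P.IsPrime ∧
        P.comap (algebraMap R (integralClosure R (FractionRing R))) =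
          (HomogeneousIdeal.irrelevant 𝒜).toIdeal := by
  set φ := integralClosureCoaction 𝒜 (FractionRing R)
  set M := RingHom.ker ((evalRingHom 0).comp φ)
  have hM : M.comap (algebraMap R (integralClosure R (FractionRing R))) =
      (HomogeneousIdeal.irrelevant 𝒜).toIdeal :=
    comap_ker_evalRingHom_zero_comp 𝒜 φ (integralClosureCoaction_comp_algebraMap 𝒜 _)
      (FaithfulSMul.algebraMap_injective _ _)
  have : M.IsPrime := RingHom.ker_isPrime _
  have hMmax : M.IsMaximal := Ideal.isMaximal_of_isIntegral_of_isMaximal_comap M (hM ▸ hfix)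
  refine ⟨M, ⟨inferInstance, hM⟩, fun P ⟨hP, hPM⟩ ↦ (hMmax.eq_of_le hP.ne_top fun y hy ↦ ?_).symm⟩
  have hy0 : eval 0 (φ y) = 0 := hy
  simpa [hy0] using sub_eval_zero_mem_of_irrelevant_le_comap 𝒜 φ
    (integralClosureCoaction_comp_algebraMap 𝒜 _)
    (evalRingHom_one_comp_integralClosureCoaction 𝒜 _) hPM.ge (Algebra.IsIntegral.isIntegral y)

/-- Let `X = Spec R` be an irreducible affine variety over an algebraically
closed field `k`, equipped with an action of the multiplicative monoid `𝔸¹` extending a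
`Gₘ`-action; equivalently, `R` carries an `ℕ`-grading `𝒜`.  Suppose the fixed locus
`X⁰ = X^{Gₘ}` consists of a single (closed) point `x`, i.e. the irrelevant ideal
`R₊` is a maximal ideal.  Then `X` is unibranch at `x`: the normalization of `X` (the
integral closure `R'` of `R` in its fraction field) has exactly one point above `x`. -/
theorem unibranch_of_monoid_action_single_fixed_point
    (k : Type) [Field k] [IsAlgClosed k]
    (R : Type) [CommRing R] [IsDomain R] [Algebra k R]
    (hft : Algebra.FiniteType k R)
    (𝒜 : ℕ → Submodule k R) [GradedAlgebra 𝒜]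
    (hfix : (HomogeneousIdeal.irrelevant 𝒜).toIdeal.IsMaximal) :
    ∃! P : Ideal (integralClosure R (FractionRing R)),
      P.IsPrime ∧
        P.comap (algebraMap R (integralClosure R (FractionRing R))) =
          (HomogeneousIdeal.irrelevant 𝒜).toIdeal :=
  unibranch_of_monoid_action_single_fixed_point_general k R 𝒜 hfix
end
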